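/- Let (W₁, (π₁, K₁)) and (W₂, (π₂, K₂)) be ĝ[σ]-module structures in category C, and let Φ : W₁ → W₂ be a linear map satisfying Φ∘π₁(u) = π₂(u)∘Φ for all u ∈ L(g,σ) and Φ∘K₁ = K₂∘Φ. Then Φ∘(π₁)_R(u) = (π₂)_R(u)∘Φ and Φ∘(π₁)_E(u) = (π₂)_E(u)∘Φ for all u ∈ L(g,σ). -/

import Mathlib

open scoped TensorProduct

noncomputable section
namespace Twisted

variable (g : Type) [LieRing g] [LieAlgebra ℂ g]

abbrev Amb : Type := LaurentPolynomial ℂ ⊗[ℂ] g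

instance : LieAlgebra ℂ (Amb g) :=
  { (inferInstance : Module ℂ (Amb g)) with
    lie_smul := fun c x y => by
      rw [← algebraMap_smul (LaurentPolynomial ℂ) c y,
        lie_smul (R := LaurentPolynomial ℂ) (algebraMap ℂ (LaurentPolynomial ℂ) c) x y,
        algebraMap_smul] }

/-- `ε = exp(2πi/N)`. -/
def eps (N : ℕ) : ℂ := Complex.exp (2 * (Real.pi : ℂ) * Complex.I / (N : ℂ))

variable (σ : g ≃ₗ⁅ℂ⁆ g) (N : ℕ)

/-- `a ∈ g_k`, i.e. `σ a = ε^k • a`. -/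
def homog (k : ℤ) (a : g) : Prop := σ a = eps N ^ k • a

/-- The generators `s^k ⊗ a`, for `a ∈ g_k`. -/
def genSet : Set (Amb g) :=
  {x | ∃ (k : ℤ) (a : g), homog g σ N k a ∧ x = LaurentPolynomial.T k ⊗ₜ[ℂ] a}

/-- The twisted loop algebra `L(g,σ)`, the Lie subalgebra of `ℂ[s,s⁻¹] ⊗ g`
spanned by the elements `s^k ⊗ a` with `a ∈ g_k`. -/
def Loop : LieSubalgebra ℂ (Amb g) := LieSubalgebra.lieSpan ℂ (Amb g) (genSet g σ N)

/-- The element `s^k ⊗ a` of `L(g,σ)`, for `a ∈ g_k`. -/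
def sGen (k : ℤ) (a : g) (h : homog g σ N k a) : Loop g σ N :=
  ⟨LaurentPolynomial.T k ⊗ₜ[ℂ] a, LieSubalgebra.subset_lieSpan ⟨k, a, h, rfl⟩⟩

/-- The element `(s^k p(s^N)) ⊗ a` of `L(g,σ)`, for `a ∈ g_k`. -/
def sPolyGen (p : Polynomial ℂ) (k : ℤ) (a : g)
    (h : ∀ i : ℕ, homog g σ N (k + N * i) a) : Loop g σ N :=
  ∑ i ∈ Finset.range (p.natDegree + 1), p.coeff i • sGen g σ N (k + N * i) a (h i)

variable (N : ℕ) (W : Type) [AddCommGroup W] [Module ℂ W]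

/-- The shift operator on `F(W) = (ℤ → End W)`, encoding multiplication by `x`:
`(x·a)_k = a_{k+N}`. -/
def shiftE : Module.End ℂ (ℤ → Module.End ℂ W) where
  toFun a := fun k => a (k + N)
  map_add' _ _ := rfl
  map_smul' _ _ := rfl

/-- The action of `ℂ[x]` on `F(W)`. -/
def polyAct (p : Polynomial ℂ) (a : ℤ → Module.End ℂ W) : ℤ → Module.End ℂ W :=
  Polynomial.aeval (shiftE N W) p a

/-- Membership in `E(W)`. -/
def memE (a : ℤ → Module.End ℂ W) : Prop :=
  ∀ w : W, ∃ M : ℤ, ∀ k ≥ M, a k w = 0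

/-- Membership in `Ē(W)`. -/
def memEbar (a : ℤ → Module.End ℂ W) : Prop :=
  ∃ p : Polynomial ℂ, p ≠ 0 ∧ memE W (polyAct N W p a)

/-- Membership in `Ē₀(W)`. -/
def memE0 (a : ℤ → Module.End ℂ W) : Prop :=
  ∃ p : Polynomial ℂ, p ≠ 0 ∧ polyAct N W p a = 0

variable (g : Type) [LieRing g] [LieAlgebra ℂ g] (σ : g ≃ₗ⁅ℂ⁆ g) (N : ℕ)
variable (B : LinearMap.BilinForm ℂ g)

/-- `γ` is the bilinear form on `L(g,σ)` with
`γ(s^m ⊗ a, s^n ⊗ b) = (m/N) B(a,b) δ_{m+n,0}`. -/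
def IsGamma (γ : Loop g σ N →ₗ[ℂ] Loop g σ N →ₗ[ℂ] ℂ) : Prop :=
  ∀ (m n : ℤ) (a b : g) (ha : homog g σ N m a) (hb : homog g σ N n b),
    γ (sGen g σ N m a ha) (sGen g σ N n b hb) =
      if m + n = 0 then (m : ℂ) / (N : ℂ) * B a b else 0

variable (W : Type) [AddCommGroup W] [Module ℂ W]

/-- `(π, K)` is a `ĝ[σ]`-module structure on `W` (relative to the form `γ`). -/
def IsHatMod (π : Loop g σ N →ₗ[ℂ] Module.End ℂ W) (K : Module.End ℂ W)
    (γ : Loop g σ N →ₗ[ℂ] Loop g σ N →ₗ[ℂ] ℂ) : Prop :=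
  (∀ u, K * π u = π u * K) ∧
  (∀ u v, π u * π v - π v * π u = π ⁅u, v⁆ + γ u v • K)

/-- `(π, K)` is restricted. -/
def IsRestricted (π : Loop g σ N →ₗ[ℂ] Module.End ℂ W) : Prop :=
  ∀ (w : W) (i : ℤ) (a : g), homog g σ N i a →
    ∃ M : ℤ, ∀ k ≥ M, ∀ h : homog g σ N k a, π (sGen g σ N k a h) w = 0

/-- `(π, K)` is irreducible. -/
def IsIrred (π : Loop g σ N →ₗ[ℂ] Module.End ℂ W) (K : Module.End ℂ W) : Prop :=
  Nontrivial W ∧ ∀ S : Submodule ℂ W, (∀ x ∈ S, K x ∈ S) →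
    (∀ u, ∀ x ∈ S, π u x ∈ S) → S = ⊥ ∨ S = ⊤

open scoped Classical in
/-- The generating function `π_a ∈ F(W)` attached to a homogeneous element `a`. -/
def piFun (π : Loop g σ N →ₗ[ℂ] Module.End ℂ W) (a : g) : ℤ → Module.End ℂ W :=
  fun k => if h : homog g σ N k a then π (sGen g σ N k a h) else 0

/-- `(π, K)` lies in category `C`. -/
def InCatC (π : Loop g σ N →ₗ[ℂ] Module.End ℂ W) : Prop :=
  ∃ p : Polynomial ℂ, p ≠ 0 ∧ ∀ (i : ℤ) (a : g), homog g σ N i a →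
    memE W (polyAct N W p (piFun g σ N W π a))

/-- `πR` is the map `π_R` determined by `π_R(s^k ⊗ a) = (ψ_R(π_a))_k`,
where `ψ_R(π_a)` is the projection of `π_a` to `E(W)` along `Ē₀(W)`. -/
def IsPiR (π πR : Loop g σ N →ₗ[ℂ] Module.End ℂ W) : Prop :=
  ∀ a : g, (∃ i : ℤ, homog g σ N i a) →
    ∃ e : ℤ → Module.End ℂ W, memE W e ∧ memE0 N W (piFun g σ N W π a - e) ∧
      ∀ (k : ℤ) (h : homog g σ N k a), πR (sGen g σ N k a h) = e k


/-!
The `E`-part of a generating function is the projection along `Ē₀(W)`, and this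
decomposition is canonical: if a sequence `d : ℤ → V` satisfies a linear recurrence
`∑ qᵢ d(j + N i) = 0` with `q ≠ 0` and vanishes for large indices, then solving the recurrence
for the term of lowest index `j + N · ord q` shows, by descending induction, that `d = 0`.
For a homomorphism `Φ` and a vector `w`, the defect `k ↦ Φ (e₁ k w) - e₂ k (Φ w)` of the
`E`-parts is such a sequence: it vanishes for large `k` because `e₁, e₂ ∈ E`, and, since `Φ`
intertwines the full generating functions, it is, up to sign, also the defect of the
`Ē₀`-parts, which is annihilated by the product of their annihilating polynomials. Finally `π_R` is linear and
`L(g,σ)` is already linearly spanned by the elements `s^k ⊗ a`, since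
`⁅s^m ⊗ a, s^n ⊗ b⁆ = s^(m+n) ⊗ ⁅a, b⁆`.
-/

section Recurrence

variable {V : Type*} [AddCommGroup V] [Module ℂ V] {N : ℕ} {q : Polynomial ℂ} {d : ℤ → V}

lemma eq_zero_of_recurrence_of_forall_gt (hN : 0 < N) (hq : q ≠ 0)
    (hrec : ∀ j, ∑ i ∈ Finset.range (q.natDegree + 1), q.coeff i • d (j + N * i) = 0)
    {j : ℤ} (hj : ∀ k > j, d k = 0) : d j = 0 := by
  set m := q.natTrailingDegree
  have hm : m ∈ Finset.range (q.natDegree + 1) :=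
    Finset.mem_range.mpr (Nat.lt_succ_of_le q.natTrailingDegree_le_natDegree)
  have h := hrec (j - N * m)
  rw [Finset.sum_eq_single_of_mem m hm fun i _ him => ?_] at h
  · rw [sub_add_cancel] at h
    exact (smul_eq_zero.mp h).resolve_left (Polynomial.coeff_natTrailingDegree_ne_zero.mpr hq)
  rcases him.lt_or_gt with him | him
  · rw [Polynomial.coeff_eq_zero_of_lt_natTrailingDegree him, zero_smul]
  · have : (N : ℤ) * m < N * i := by gcongr
    rw [hj _ (by linarith), smul_zero]

lemma eq_zero_of_recurrence_of_eventually_eq_zero (hN : 0 < N) (hq : q ≠ 0)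
    (hrec : ∀ j, ∑ i ∈ Finset.range (q.natDegree + 1), q.coeff i • d (j + N * i) = 0)
    {M : ℤ} (hM : ∀ k ≥ M, d k = 0) : d = 0 := by
  have hdown : ∀ n ≤ M, ∀ k ≥ n, d k = 0 := by
    intro n hn
    induction n, hn using Int.leInductionDown with
    | base => exact hM
    | pred n _ ih =>
      intro k hk
      rcases hk.lt_or_eq with hk | rfl
      · exact ih k (by omega)
      · exact eq_zero_of_recurrence_of_forall_gt hN hq hrec fun k hk => ih k (by omega)
  funext j
  exact hdown (min j M) (min_le_right j M) j (min_le_left j M)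

end Recurrence

lemma shiftE_pow_apply (N : ℕ) (W : Type) [AddCommGroup W] [Module ℂ W]
    (i : ℕ) (a : ℤ → Module.End ℂ W) (j : ℤ) :
    (shiftE N W ^ i) a j = a (j + N * i) := by
  induction i generalizing a j with
  | zero => simp
  | succ i ih =>
    rw [pow_succ, Module.End.mul_apply, ih]
    change a (j + N * i + N) = _
    push_cast
    ring_nf

lemma polyAct_apply_apply (N : ℕ) (W : Type) [AddCommGroup W] [Module ℂ W]
    (q : Polynomial ℂ) (a : ℤ → Module.End ℂ W) (j : ℤ) (w : W) :
    polyAct N W q a j w =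
      ∑ i ∈ Finset.range (q.natDegree + 1), q.coeff i • a (j + N * i) w := by
  simp only [polyAct, Polynomial.aeval_eq_sum_range, LinearMap.sum_apply, LinearMap.smul_apply,
    Finset.sum_apply, Pi.smul_apply, shiftE_pow_apply]

lemma polyAct_mul_eq_zero (N : ℕ) (W : Type) [AddCommGroup W] [Module ℂ W]
    (p : Polynomial ℂ) {q : Polynomial ℂ} {a : ℤ → Module.End ℂ W}
    (h : polyAct N W q a = 0) : polyAct N W (p * q) a = 0 := by
  simp only [polyAct] at h ⊢
  rw [map_mul, Module.End.mul_apply, h, map_zero]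

/-- The naturality of `ψ_R`. -/
lemma intertwines_of_memE_of_memE0 {N : ℕ} (hN : 0 < N)
    {W₁ W₂ : Type} [AddCommGroup W₁] [Module ℂ W₁] [AddCommGroup W₂] [Module ℂ W₂]
    (Φ : W₁ →ₗ[ℂ] W₂) {f₁ e₁ : ℤ → Module.End ℂ W₁} {f₂ e₂ : ℤ → Module.End ℂ W₂}
    (hf : ∀ k w, Φ (f₁ k w) = f₂ k (Φ w))
    (he₁ : memE W₁ e₁) (hr₁ : memE0 N W₁ (f₁ - e₁))
    (he₂ : memE W₂ e₂) (hr₂ : memE0 N W₂ (f₂ - e₂)) (k : ℤ) (w : W₁) :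
    Φ (e₁ k w) = e₂ k (Φ w) := by
  obtain ⟨p₁, hp₁, hz₁⟩ := hr₁
  obtain ⟨p₂, hp₂, hz₂⟩ := hr₂
  set d : ℤ → W₂ := fun k => Φ (e₁ k w) - e₂ k (Φ w)
  have hd : ∀ k, d k = (f₂ - e₂) k (Φ w) - Φ ((f₁ - e₁) k w) := fun k => by
    simp only [d, Pi.sub_apply, LinearMap.sub_apply, map_sub, hf]
    abel
  have hrec (j : ℤ) :
      ∑ i ∈ Finset.range ((p₂ * p₁).natDegree + 1), (p₂ * p₁).coeff i • d (j + N * i) = 0 := by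
    have h₁ := congrArg (fun a => Φ (a j w)) (polyAct_mul_eq_zero N W₁ p₂ hz₁)
    have h₂ := congrArg (fun a => a j (Φ w))
      (mul_comm p₁ p₂ ▸ polyAct_mul_eq_zero N W₂ p₁ hz₂)
    simp only [polyAct_apply_apply, map_sum, map_smul, Pi.zero_apply, LinearMap.zero_apply,
      map_zero] at h₁ h₂
    simp only [hd, smul_sub, Finset.sum_sub_distrib, h₁, h₂, sub_zero]
  obtain ⟨M₁, hM₁⟩ := he₁ w
  obtain ⟨M₂, hM₂⟩ := he₂ (Φ w)
  have hM : ∀ k ≥ max M₁ M₂, d k = 0 := fun k hk => by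
    simp [d, hM₁ k (le_of_max_le_left hk), hM₂ k (le_of_max_le_right hk)]
  have := congrFun (eq_zero_of_recurrence_of_eventually_eq_zero hN (mul_ne_zero hp₂ hp₁) hrec hM) k
  exact sub_eq_zero.mp this

lemma piFun_intertwines (g : Type) [LieRing g] [LieAlgebra ℂ g] (σ : g ≃ₗ⁅ℂ⁆ g) (N : ℕ)
    {W₁ W₂ : Type} [AddCommGroup W₁] [Module ℂ W₁] [AddCommGroup W₂] [Module ℂ W₂]
    {π₁ : Loop g σ N →ₗ[ℂ] Module.End ℂ W₁} {π₂ : Loop g σ N →ₗ[ℂ] Module.End ℂ W₂}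
    {Φ : W₁ →ₗ[ℂ] W₂} (hΦπ : ∀ u w, Φ (π₁ u w) = π₂ u (Φ w)) (a : g) (k : ℤ) (w : W₁) :
    Φ (piFun g σ N W₁ π₁ a k w) = piFun g σ N W₂ π₂ a k (Φ w) := by
  unfold piFun
  split_ifs
  · exact hΦπ _ w
  · simp

lemma _root_.LieSubalgebra.coe_lieSpan_eq_span_of_forall_lie_mem {R L : Type*} [CommRing R]
    [LieRing L] [LieAlgebra R L] {s : Set L}
    (hs : ∀ x ∈ s, ∀ y ∈ s, ⁅x, y⁆ ∈ Submodule.span R s) :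
    (LieSubalgebra.lieSpan R L s : Submodule R L) = Submodule.span R s := by
  have hlie {x y : L} (hx : x ∈ Submodule.span R s) (hy : y ∈ Submodule.span R s) :
      ⁅x, y⁆ ∈ Submodule.span R s := by
    have h := Submodule.apply_mem_map₂ (LieModule.toEnd R L L : L →ₗ[R] Module.End R L) hx hy
    rw [Submodule.map₂_span_span] at h
    refine Submodule.span_le.mpr ?_ h
    rintro _ ⟨x, hx, y, hy, rfl⟩
    exact hs x hx y hy
  refine le_antisymm ?_ LieSubalgebra.submodule_span_le_lieSpan
  change _ ≤ ({ Submodule.span R s with lie_mem' := hlie } : LieSubalgebra R L)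
  rw [LieSubalgebra.lieSpan_le]
  exact Submodule.subset_span

lemma homog_lie (g : Type) [LieRing g] [LieAlgebra ℂ g] (σ : g ≃ₗ⁅ℂ⁆ g) (N : ℕ)
    {m n : ℤ} {a b : g} (ha : homog g σ N m a) (hb : homog g σ N n b) :
    homog g σ N (m + n) ⁅a, b⁆ := by
  rw [homog, LieEquiv.map_lie, ha, hb, smul_lie, lie_smul, smul_smul, ← zpow_add₀]
  exact Complex.exp_ne_zero _

lemma lie_mem_genSet (g : Type) [LieRing g] [LieAlgebra ℂ g] (σ : g ≃ₗ⁅ℂ⁆ g) (N : ℕ)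
    {x y : Amb g} (hx : x ∈ genSet g σ N) (hy : y ∈ genSet g σ N) :
    ⁅x, y⁆ ∈ genSet g σ N := by
  obtain ⟨m, a, ha, rfl⟩ := hx
  obtain ⟨n, b, hb, rfl⟩ := hy
  refine ⟨m + n, ⁅a, b⁆, homog_lie g σ N ha hb, ?_⟩
  rw [LieAlgebra.ExtendScalars.bracket_tmul, LaurentPolynomial.T_add]

lemma span_preimage_genSet_eq_top (g : Type) [LieRing g] [LieAlgebra ℂ g]
    (σ : g ≃ₗ⁅ℂ⁆ g) (N : ℕ) :
    Submodule.span ℂ (((↑) : Loop g σ N → Amb g) ⁻¹' genSet g σ N) = ⊤ := by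
  rw [← LieSubalgebra.coe_lieSpan_eq_span_of_forall_lie_mem 
    (s := ((↑) : Loop g σ N → Amb g) ⁻¹' genSet g σ N)
    fun x hx y hy => Submodule.subset_span (lie_mem_genSet g σ N hx hy)]
  exact congrArg LieSubalgebra.toSubmodule LieSubalgebra.lieSpan_lieSpan_coe_preimage

lemma Loop.linearMap_ext (g : Type) [LieRing g] [LieAlgebra ℂ g] (σ : g ≃ₗ⁅ℂ⁆ g) (N : ℕ)
    {M : Type*} [AddCommGroup M] [Module ℂ M] {f f' : Loop g σ N →ₗ[ℂ] M}
    (h : ∀ k a ha, f (sGen g σ N k a ha) = f' (sGen g σ N k a ha)) : f = f' := by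
  refine LinearMap.ext_on (span_preimage_genSet_eq_top g σ N) ?_
  rintro ⟨_, _⟩ ⟨k, a, ha, rfl⟩
  exact h k a ha

theorem statement17_general
    (g : Type) [LieRing g] [LieAlgebra ℂ g]
    (N : ℕ) (hN : 0 < N) (σ : g ≃ₗ⁅ℂ⁆ g)
    (W₁ W₂ : Type) [AddCommGroup W₁] [Module ℂ W₁] [AddCommGroup W₂] [Module ℂ W₂]
    (π₁ πR₁ : Loop g σ N →ₗ[ℂ] Module.End ℂ W₁)
    (π₂ πR₂ : Loop g σ N →ₗ[ℂ] Module.End ℂ W₂)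
    (hπR₁ : IsPiR g σ N W₁ π₁ πR₁) (hπR₂ : IsPiR g σ N W₂ π₂ πR₂)
    (Φ : W₁ →ₗ[ℂ] W₂)
    (hΦπ : ∀ (u : Loop g σ N) (w : W₁), Φ (π₁ u w) = π₂ u (Φ w)) :
    (∀ (u : Loop g σ N) (w : W₁), Φ (πR₁ u w) = πR₂ u (Φ w)) ∧
    (∀ (u : Loop g σ N) (w : W₁), Φ ((π₁ - πR₁) u w) = (π₂ - πR₂) u (Φ w)) := by
  have hR : πR₁.compr₂ Φ = πR₂.compl₂ Φ := Loop.linearMap_ext g σ N fun k a ha => by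
    obtain ⟨e₁, he₁, hr₁, hπR₁a⟩ := hπR₁ a ⟨k, ha⟩
    obtain ⟨e₂, he₂, hr₂, hπR₂a⟩ := hπR₂ a ⟨k, ha⟩
    ext w
    simp only [LinearMap.compr₂_apply, LinearMap.compl₂_apply, hπR₁a, hπR₂a]
    exact intertwines_of_memE_of_memE0 hN Φ (piFun_intertwines g σ N hΦπ a) he₁ hr₁ he₂ hr₂ k w
  have hR' (u : Loop g σ N) (w : W₁) : Φ (πR₁ u w) = πR₂ u (Φ w) :=
    LinearMap.congr_fun₂ hR u w
  refine ⟨hR', fun u w => ?_⟩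
  simp only [LinearMap.sub_apply, map_sub, hΦπ, hR']

/-- A homomorphism of `ĝ[σ]`-module structures in category `C`
intertwines the factorizations: `Φ∘(π₁)_R(u) = (π₂)_R(u)∘Φ` and
`Φ∘(π₁)_E(u) = (π₂)_E(u)∘Φ` for all `u ∈ L(g,σ)`, where `π_E = π − π_R`. -/
theorem statement17
    (g : Type) [LieRing g] [LieAlgebra ℂ g] [LieAlgebra.IsSimple ℂ g]
    [FiniteDimensional ℂ g]
    (N : ℕ) (hN : 0 < N) (σ : g ≃ₗ⁅ℂ⁆ g) (hσ : ∀ a : g, (⇑σ)^[N] a = a)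
    (B : LinearMap.BilinForm ℂ g)
    (hBsymm : ∀ a b : g, B a b = B b a)
    (hBinv : ∀ a b c : g, B ⁅a, b⁆ c = B a ⁅b, c⁆)
    (hBnd : ∀ a : g, (∀ b : g, B a b = 0) → a = 0)
    (W₁ W₂ : Type) [AddCommGroup W₁] [Module ℂ W₁] [AddCommGroup W₂] [Module ℂ W₂]
    (π₁ πR₁ : Loop g σ N →ₗ[ℂ] Module.End ℂ W₁) (K₁ : Module.End ℂ W₁)
    (π₂ πR₂ : Loop g σ N →ₗ[ℂ] Module.End ℂ W₂) (K₂ : Module.End ℂ W₂)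
    (γ : Loop g σ N →ₗ[ℂ] Loop g σ N →ₗ[ℂ] ℂ) (hγ : IsGamma g σ N B γ)
    (hmod₁ : IsHatMod g σ N W₁ π₁ K₁ γ) (hC₁ : InCatC g σ N W₁ π₁)
    (hmod₂ : IsHatMod g σ N W₂ π₂ K₂ γ) (hC₂ : InCatC g σ N W₂ π₂)
    (hπR₁ : IsPiR g σ N W₁ π₁ πR₁) (hπR₂ : IsPiR g σ N W₂ π₂ πR₂)
    (Φ : W₁ →ₗ[ℂ] W₂)
    (hΦπ : ∀ (u : Loop g σ N) (w : W₁), Φ (π₁ u w) = π₂ u (Φ w))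
    (hΦK : ∀ w : W₁, Φ (K₁ w) = K₂ (Φ w)) :
    (∀ (u : Loop g σ N) (w : W₁), Φ (πR₁ u w) = πR₂ u (Φ w)) ∧
    (∀ (u : Loop g σ N) (w : W₁), Φ ((π₁ - πR₁) u w) = (π₂ - πR₂) u (Φ w)) :=
  statement17_general g N hN σ W₁ W₂ π₁ πR₁ π₂ πR₂ hπR₁ hπR₂ Φ hΦπ

end Twisted
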